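/- arXiv:2009.12762 — 3 statements merged into one kernel-verified Lean document; each statement's English description precedes it below -/
import Mathlib

section
/- With Θ and N_{σ,τ} as above, one has |N_{σ,τ}| ≤ max( (1/4)/√(j²+k²), (1/4)/√(J²+K²) ). -/
open Real

lemma abs_mul_sub_mul_le_sqrt_mul_sqrt (x y u v : ℝ) :
    |x * v - y * u| ≤ √(x ^ 2 + y ^ 2) * √(u ^ 2 + v ^ 2) := by
  rw [← sqrt_mul (by positivity), ← sqrt_sq_eq_abs]
  exact sqrt_le_sqrt (by nlinarith [sq_nonneg (x * u + y * v)])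

/-- The determinant of `(p, q)` and `(r, s)` equals the determinant of their sum with either of
them, so it is bounded by the length of the sum times the shorter of the two lengths. -/
lemma abs_det_le_sqrt_add_mul_min (p q r s : ℝ) :
    |p * s - q * r| ≤
      √((p + r) ^ 2 + (q + s) ^ 2) * min √(p ^ 2 + q ^ 2) √(r ^ 2 + s ^ 2) := by
  rw [mul_min_of_nonneg _ _ (sqrt_nonneg _)]
  refine le_min ?_ ?_
  · have h := abs_mul_sub_mul_le_sqrt_mul_sqrt (p + r) (q + s) p q
    rwa [← abs_neg, show -((p + r) * q - (q + s) * p) = p * s - q * r by ring] at h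
  · have h := abs_mul_sub_mul_le_sqrt_mul_sqrt (p + r) (q + s) r s
    rwa [show (p + r) * s - (q + s) * r = p * s - q * r by ring] at h

lemma abs_quarter_inv_sub_inv_mul_sqrt_le {a b : ℝ} (ha : 0 ≤ a) (hab : a ≤ b) :
    |(1 / 4) * (1 / a - 1 / b)| * √a ≤ (1 / 4) / √a := by
  rcases ha.eq_or_lt with rfl | ha
  · simp
  have hinv : 1 / b ≤ 1 / a := one_div_le_one_div_of_le ha hab
  calc |(1 / 4) * (1 / a - 1 / b)| * √a ≤ (1 / 4) * (1 / a) * √a := by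
        rw [abs_of_nonneg (by linarith)]
        gcongr
        linarith [one_div_nonneg.mpr (ha.le.trans hab)]
    _ = (1 / 4) / √a := by
        field_simp
        rw [sq_sqrt ha.le]

lemma abs_quarter_inv_sub_inv_mul_min_le {a b : ℝ} (ha : 0 ≤ a) (hb : 0 ≤ b) :
    |(1 / 4) * (1 / a - 1 / b)| * min √a √b ≤ max ((1 / 4) / √b) ((1 / 4) / √a) := by
  rcases le_total a b with hab | hab
  · rw [min_eq_left (sqrt_le_sqrt hab)]
    exact (abs_quarter_inv_sub_inv_mul_sqrt_le ha hab).trans (le_max_right _ _)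
  · rw [min_eq_right (sqrt_le_sqrt hab), ← neg_sub, mul_neg, abs_neg]
    exact (abs_quarter_inv_sub_inv_mul_sqrt_le hb hab).trans (le_max_left _ _)

theorem stmt1_general (J K j k : ℕ)
    (σ τ : ℝ) (hσ : σ = 1 ∨ σ = -1) (hτ : τ = 1 ∨ τ = -1)
    (Θ N : ℝ)
    (hΘ : Θ = (1/4) * (1/((J:ℝ)^2+(K:ℝ)^2) - 1/((j:ℝ)^2+(k:ℝ)^2)))
    (hN : N = Θ * (σ*J*k - τ*K*j) / Real.sqrt ((σ*J+j)^2 + (τ*K+k)^2)) :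
    |N| ≤ max ((1/4) / Real.sqrt ((j:ℝ)^2+(k:ℝ)^2))
              ((1/4) / Real.sqrt ((J:ℝ)^2+(K:ℝ)^2)) := by
  have hσ2 : σ ^ 2 = 1 := by rcases hσ with rfl | rfl <;> norm_num
  have hτ2 : τ ^ 2 = 1 := by rcases hτ with rfl | rfl <;> norm_num
  have hnum := abs_det_le_sqrt_add_mul_min (σ * J) (τ * K) j k
  rw [mul_pow, mul_pow, hσ2, hτ2, one_mul, one_mul] at hnum
  calc |N| = |Θ| * (|σ * J * k - τ * K * j| / √((σ * J + j) ^ 2 + (τ * K + k) ^ 2)) := by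
        rw [hN, abs_div, abs_mul, abs_of_nonneg (sqrt_nonneg _), mul_div_assoc]
    _ ≤ |Θ| * min √((J : ℝ) ^ 2 + (K : ℝ) ^ 2) √((j : ℝ) ^ 2 + (k : ℝ) ^ 2) := by
        gcongr
        exact div_le_of_le_mul₀ (sqrt_nonneg _) (by positivity) (hnum.trans_eq (mul_comm _ _))
    _ ≤ _ := hΘ ▸ abs_quarter_inv_sub_inv_mul_min_le (by positivity) (by positivity)

theorem stmt1 (J K j k : ℕ) (hJ : 0 < J) (hK : 0 < K) (hj : 0 < j) (hk : 0 < k)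
    (σ τ : ℝ) (hσ : σ = 1 ∨ σ = -1) (hτ : τ = 1 ∨ τ = -1)
    (Θ N : ℝ)
    (hΘ : Θ = (1/4) * (1/((J:ℝ)^2+(K:ℝ)^2) - 1/((j:ℝ)^2+(k:ℝ)^2)))
    (hden : Real.sqrt ((σ*J+j)^2 + (τ*K+k)^2) ≠ 0)
    (hN : N = Θ * (σ*J*k - τ*K*j) / Real.sqrt ((σ*J+j)^2 + (τ*K+k)^2)) :
    |N| ≤ max ((1/4) / Real.sqrt ((j:ℝ)^2+(k:ℝ)^2))
              ((1/4) / Real.sqrt ((J:ℝ)^2+(K:ℝ)^2)) :=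
  stmt1_general J K j k σ τ hσ hτ Θ N hΘ hN
end

section
/- Let B be a Banach space, D ⊆ B open, F : D → B a C¹ map, φ ∈ B, L : B → B bounded linear. Suppose the quasi-Newton map N(h) = F(φ+Lh) − φ + (I−L)h is defined on the closed ball B_δ = {h : ‖h‖ ≤ δ} (i.e. φ+Lh ∈ D for all such h), and there are ε, K > 0 with ε + Kδ < δ such that ‖N(0)‖ < ε and ‖DN(h)‖ < K for all h ∈ B_δ. Then F has a fixed point in the set φ + L(B_δ). -/
/-!
The quasi-Newton map `N` is `K`-Lipschitz on the convex ball `B_δ` by the mean value inequality,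
and `‖N 0‖ + Kδ < δ` makes it map `B_δ` into itself; since `Kδ < δ` forces `K < 1`, the Banach
fixed point theorem gives `h ∈ B_δ` with `N h = h`, which unwinds to `F (φ + L h) = φ + L h`.
-/

open Metric Set Function NNReal

section FixedPoint

variable {α : Type*} {f : α → α} {K : ℝ≥0} {x : α} {δ : ℝ}

theorem LipschitzOnWith.mapsTo_closedBall [PseudoMetricSpace α]
    (hf : LipschitzOnWith K f (closedBall x δ)) (hx : dist (f x) x + K * δ ≤ δ) :
    MapsTo f (closedBall x δ) (closedBall x δ) := by
  intro y hy
  have hyx : dist y x ≤ δ := hy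
  have hxx : x ∈ closedBall x δ := mem_closedBall_self (dist_nonneg.trans hyx)
  calc dist (f y) x ≤ dist (f y) (f x) + dist (f x) x := dist_triangle _ _ _
    _ ≤ K * dist y x + dist (f x) x := by gcongr; exact hf.dist_le_mul y hy x hxx
    _ ≤ K * δ + dist (f x) x := by gcongr
    _ ≤ δ := by linarith

theorem LipschitzOnWith.exists_isFixedPt_closedBall [MetricSpace α] [CompleteSpace α]
    (hf : LipschitzOnWith K f (closedBall x δ)) (hK : K < 1) (hδ : 0 ≤ δ)
    (hx : dist (f x) x + K * δ ≤ δ) :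
    ∃ y ∈ closedBall x δ, IsFixedPt f y := by
  have hmaps := hf.mapsTo_closedBall hx
  obtain ⟨y, hy, hfix, -⟩ := ContractingWith.exists_fixedPoint' isClosed_closedBall.isComplete
    hmaps ⟨hK, hf.mapsToRestrict hmaps⟩ (mem_closedBall_self hδ) (edist_ne_top _ _)
  exact ⟨y, hy, hfix⟩

end FixedPoint

theorem stmt7_general {B : Type*} [NormedAddCommGroup B] [NormedSpace ℝ B] [CompleteSpace B]
    (F : B → B)
    (φ : B) (L : B →L[ℝ] B) (N : B → B)
    (hN : ∀ h, N h = F (φ + L h) - φ + (h - L h))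
    (δ ε K : ℝ) (hδ : 0 < δ) (hK : 0 < K) (hsmall : ε + K * δ < δ)
    (hN0 : ‖N 0‖ < ε)
    (hdiff : ∀ h : B, ‖h‖ ≤ δ → DifferentiableAt ℝ N h ∧ ‖fderiv ℝ N h‖ < K) :
    ∃ x ∈ (fun h => φ + L h) '' Metric.closedBall (0 : B) δ, F x = x := by
  have hlip : LipschitzOnWith ⟨K, hK.le⟩ N (closedBall 0 δ) :=
    (convex_closedBall 0 δ).lipschitzOnWith_of_nnnorm_fderiv_le
      (fun h hh ↦ (hdiff h (mem_closedBall_zero_iff.1 hh)).1)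
      (fun h hh ↦ (hdiff h (mem_closedBall_zero_iff.1 hh)).2.le)
  have hK1 : K < 1 := (mul_lt_iff_lt_one_left hδ).1 (by linarith [norm_nonneg (N 0)])
  obtain ⟨h, hh, hfix⟩ := hlip.exists_isFixedPt_closedBall hK1 hδ.le
    (by rw [dist_zero_right]; exact (by linarith : ‖N 0‖ + K * δ ≤ δ))
  refine ⟨φ + L h, mem_image_of_mem _ hh, ?_⟩
  have hNh := hN h
  rw [hfix] at hNh
  linear_combination (norm := abel) -hNh

theorem stmt7 {B : Type*} [NormedAddCommGroup B] [NormedSpace ℝ B] [CompleteSpace B]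
    (D : Set B) (hD : IsOpen D) (F : B → B) (hF : ContDiffOn ℝ 1 F D)
    (φ : B) (L : B →L[ℝ] B) (N : B → B)
    (hN : ∀ h, N h = F (φ + L h) - φ + (h - L h))
    (δ ε K : ℝ) (hδ : 0 < δ) (hε : 0 < ε) (hK : 0 < K) (hsmall : ε + K * δ < δ)
    (hdom : ∀ h : B, ‖h‖ ≤ δ → φ + L h ∈ D)
    (hN0 : ‖N 0‖ < ε)
    (hdiff : ∀ h : B, ‖h‖ ≤ δ → DifferentiableAt ℝ N h ∧ ‖fderiv ℝ N h‖ < K) :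
    ∃ x ∈ (fun h => φ + L h) '' Metric.closedBall (0 : B) δ, F x = x :=
  stmt7_general F φ L N hN δ ε K hδ hK hsmall hN0 hdiff
end

section
/- Let Φ = sin(Jx)sin(Ky) and φ = sin(jx)sin(ky) with J,K,j,k positive integers, and define u = J∇Δ⁻¹ (i.e. u = 𝕁∇Δ⁻¹Φ where 𝕁 is rotation by −90°, Δ the Dirichlet Laplacian so Δ⁻¹Φ = −Φ/(J²+K²)). Then the symmetric bilinear expression L(Φ)φ = (∇Φ)·𝕁∇Δ⁻¹φ + (∇φ)·𝕁∇Δ⁻¹Φ equals Θ(Jk+jK)[sin((J+j)x)sin((K−k)y) − sin((J−j)x)sin((K+k)y)] + Θ(Jk−jK)[sin((J+j)x)sin((K+k)y) − sin((J−j)x)sin((K−k)y)], where Θ = (1/4)(1/(J²+K²) − 1/(j²+k²)). -/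
/-!
Writing `A = J² + K²`, `B = j² + k²` and `{f, g} = ∂ₓf ∂ᵧg - ∂ᵧf ∂ₓg` for the Poisson bracket,
`L(Φ)φ = {Φ, Δ⁻¹φ} + {φ, Δ⁻¹Φ} = -{Φ, φ}/B - {φ, Φ}/A = (1/A - 1/B) {Φ, φ}`,
so everything reduces to expanding the bracket of two sine modes by the product-to-sum
formulas `2 cos(Jx) sin(jx) = sin((J+j)x) - sin((J-j)x)` etc.
-/

open Real

theorem poissonBracket_sin_mul_sin (a b c d x y : ℝ) :
    (a * cos (a * x) * sin (b * y)) * (d * sin (c * x) * cos (d * y))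
      - (b * sin (a * x) * cos (b * y)) * (c * cos (c * x) * sin (d * y))
    = (1 / 4) *
      ((a * d + c * b) *
          (sin ((a + c) * x) * sin ((b - d) * y) - sin ((a - c) * x) * sin ((b + d) * y))
        + (a * d - c * b) *
          (sin ((a + c) * x) * sin ((b + d) * y) - sin ((a - c) * x) * sin ((b - d) * y))) := by
  simp only [add_mul, sub_mul, sin_add, sin_sub]
  ring

theorem stmt16_general (J K j k : ℕ)
    (Θ : ℝ) (hΘ : Θ = (1/4) * (1/((J:ℝ)^2+(K:ℝ)^2) - 1/((j:ℝ)^2+(k:ℝ)^2))) :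
    ∀ x y : ℝ,
      (((J:ℝ) * Real.cos (J * x) * Real.sin (K * y)) *
          (-(((k:ℝ) * Real.sin (j * x) * Real.cos (k * y)) / ((j:ℝ)^2+(k:ℝ)^2)))
        - ((K:ℝ) * Real.sin (J * x) * Real.cos (K * y)) *
          (-(((j:ℝ) * Real.cos (j * x) * Real.sin (k * y)) / ((j:ℝ)^2+(k:ℝ)^2))))
      + (((j:ℝ) * Real.cos (j * x) * Real.sin (k * y)) *
          (-(((K:ℝ) * Real.sin (J * x) * Real.cos (K * y)) / ((J:ℝ)^2+(K:ℝ)^2)))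
        - ((k:ℝ) * Real.sin (j * x) * Real.cos (k * y)) *
          (-(((J:ℝ) * Real.cos (J * x) * Real.sin (K * y)) / ((J:ℝ)^2+(K:ℝ)^2))))
      =
      Θ * ((J:ℝ)*k + (j:ℝ)*K) *
          (Real.sin (((J:ℝ)+j) * x) * Real.sin (((K:ℝ)-k) * y)
            - Real.sin (((J:ℝ)-j) * x) * Real.sin (((K:ℝ)+k) * y))
      + Θ * ((J:ℝ)*k - (j:ℝ)*K) *
          (Real.sin (((J:ℝ)+j) * x) * Real.sin (((K:ℝ)+k) * y)
            - Real.sin (((J:ℝ)-j) * x) * Real.sin (((K:ℝ)-k) * y)) := by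
  intro x y
  subst hΘ
  linear_combination (1 / ((J:ℝ)^2 + (K:ℝ)^2) - 1 / ((j:ℝ)^2 + (k:ℝ)^2)) *
    poissonBracket_sin_mul_sin J K j k x y

theorem stmt16 (J K j k : ℕ) (hJ : 0 < J) (hK : 0 < K) (hj : 0 < j) (hk : 0 < k)
    (Θ : ℝ) (hΘ : Θ = (1/4) * (1/((J:ℝ)^2+(K:ℝ)^2) - 1/((j:ℝ)^2+(k:ℝ)^2))) :
    ∀ x y : ℝ,
      (((J:ℝ) * Real.cos (J * x) * Real.sin (K * y)) *
          (-(((k:ℝ) * Real.sin (j * x) * Real.cos (k * y)) / ((j:ℝ)^2+(k:ℝ)^2)))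
        - ((K:ℝ) * Real.sin (J * x) * Real.cos (K * y)) *
          (-(((j:ℝ) * Real.cos (j * x) * Real.sin (k * y)) / ((j:ℝ)^2+(k:ℝ)^2))))
      + (((j:ℝ) * Real.cos (j * x) * Real.sin (k * y)) *
          (-(((K:ℝ) * Real.sin (J * x) * Real.cos (K * y)) / ((J:ℝ)^2+(K:ℝ)^2)))
        - ((k:ℝ) * Real.sin (j * x) * Real.cos (k * y)) *
          (-(((J:ℝ) * Real.cos (J * x) * Real.sin (K * y)) / ((J:ℝ)^2+(K:ℝ)^2))))
      =
      Θ * ((J:ℝ)*k + (j:ℝ)*K) *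
          (Real.sin (((J:ℝ)+j) * x) * Real.sin (((K:ℝ)-k) * y)
            - Real.sin (((J:ℝ)-j) * x) * Real.sin (((K:ℝ)+k) * y))
      + Θ * ((J:ℝ)*k - (j:ℝ)*K) *
          (Real.sin (((J:ℝ)+j) * x) * Real.sin (((K:ℝ)+k) * y)
            - Real.sin (((J:ℝ)-j) * x) * Real.sin (((K:ℝ)-k) * y)) :=
  stmt16_general J K j k Θ hΘ
end
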